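/- arXiv:1807.11865 — 4 statements merged into one kernel-verified Lean document; each statement's English description precedes it below -/
import Mathlib

section
/- Let σ be a positive Borel measure on ℝ with ∫ dσ(t)/(1+t²) < ∞, and let z ∈ L²(ℝ, dσ). If there exists a constant c ∈ ℂ such that ∫ z(t)/(t − λ) dσ(t) = c for all λ ∈ ℂ \ ℝ, then z(t) = 0 for σ-almost every t (and consequently c = 0 if σ ≠ 0, and c = 0 in general since the integral vanishes). -/
/-!
Letting `λ = i y` with `y → ∞` in the Cauchy transform `∫ z(t) / (t - λ) dσ(t)` shows that the
constant `c` vanishes, by dominated convergence (`z` and `1 / (t - λ)` both lie in `L²(σ)`).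
Subtracting the transforms at `λ = x + iε` and at `conj λ` then gives
`∫ z(t) / ((t - x)² + ε²) dσ(t) = 0` for all real `x` and `ε > 0`. Integrating this against a
continuous compactly supported `g` and swapping the integrals, `z` is orthogonal to the Poisson
smoothings of `g`, which tend to `π g` pointwise as `ε → 0⁺` and are bounded by `C / (1 + t²)`
uniformly in `ε ∈ (0, 1]`. Hence `∫ z g dσ = 0` for every such `g`, so `z = 0` σ-a.e.
-/

open MeasureTheory Complex ComplexConjugate Filter Topology

lemma isFiniteMeasureOnCompacts_of_integrable_of_pos {X : Type*} [TopologicalSpace X]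
    [T2Space X] [MeasurableSpace X] [OpensMeasurableSpace X] {μ : Measure X} {f : X → ℝ}
    (hf : Continuous f) (hpos : ∀ x, 0 < f x) (hint : Integrable f μ) :
    IsFiniteMeasureOnCompacts μ := by
  refine ⟨fun K hK => ?_⟩
  rcases K.eq_empty_or_nonempty with rfl | hne
  · simp
  obtain ⟨x₀, -, hmin⟩ := hK.exists_isMinOn hne hf.continuousOn
  have hone : IntegrableOn (fun _ => (1 : ℝ)) K μ := by
    refine (hint.integrableOn.const_mul (f x₀)⁻¹).mono' continuous_const.aestronglyMeasurable
      ((ae_restrict_iff' hK.measurableSet).2 (ae_of_all _ fun x hx => ?_))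
    rw [norm_one, ← div_eq_inv_mul, one_le_div (hpos x₀)]
    exact hmin hx
  simpa using (integrableOn_const_iff).1 hone

lemma memLp_two_of_sq_norm_le {α E : Type*} [MeasurableSpace α] [NormedAddCommGroup E]
    {μ : Measure α} {h : α → E} {f : α → ℝ} (hf : Integrable f μ)
    (hm : AEStronglyMeasurable h μ) (hb : ∀ᵐ a ∂μ, ‖h a‖ ^ 2 ≤ f a) : MemLp h 2 μ := by
  rw [memLp_two_iff_integrable_sq_norm hm]
  refine hf.mono' (hm.norm.pow 2) ?_
  filter_upwards [hb] with a ha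
  rwa [Real.norm_of_nonneg (by positivity)]

@[fun_prop]
lemma continuous_inv_one_add_sq : Continuous fun x : ℝ => (1 + x ^ 2)⁻¹ :=
  (by fun_prop : Continuous fun x : ℝ => 1 + x ^ 2).inv₀ fun x => by positivity

lemma exists_inv_sub_sq_add_sq_le (R : ℝ) {y : ℝ} (hy : y ≠ 0) :
    ∃ M, ∀ t x : ℝ, |x| ≤ R → ((t - x) ^ 2 + y ^ 2)⁻¹ ≤ M * (1 + t ^ 2)⁻¹ := by
  have hy2 : 0 < y ^ 2 := by positivity
  refine ⟨max 2 ((1 + 2 * R ^ 2) / y ^ 2), fun t x hx => ?_⟩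
  have hM2 := le_max_left 2 ((1 + 2 * R ^ 2) / y ^ 2)
  have hMy := (div_le_iff₀ hy2).1 (le_max_right 2 ((1 + 2 * R ^ 2) / y ^ 2))
  have hxR : x ^ 2 ≤ R ^ 2 := sq_le_sq' (abs_le.1 hx).1 (abs_le.1 hx).2
  rw [← div_eq_mul_inv, le_div_iff₀ (by positivity), inv_mul_le_iff₀ (by positivity)]
  nlinarith [sq_nonneg (t - 2 * x), mul_nonneg (sub_nonneg.2 hM2) (sq_nonneg (t - x))]

lemma sq_norm_ofReal_sub (t : ℝ) (w : ℂ) : ‖(t : ℂ) - w‖ ^ 2 = (t - w.re) ^ 2 + w.im ^ 2 := by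
  rw [Complex.sq_norm, Complex.normSq_apply]
  simp only [sub_re, sub_im, ofReal_re, ofReal_im]
  ring

lemma ofReal_sub_ne_zero (t : ℝ) {w : ℂ} (hw : w.im ≠ 0) : (t : ℂ) - w ≠ 0 := by
  rw [sub_ne_zero]
  exact fun h => hw (by rw [← h, ofReal_im])

lemma inv_ofReal_sub_sub_inv_ofReal_sub_conj (t : ℝ) (w : ℂ) :
    ((t : ℂ) - w)⁻¹ - ((t : ℂ) - conj w)⁻¹
      = 2 * w.im * I * (((t - w.re) ^ 2 + w.im ^ 2)⁻¹ : ℝ) := by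
  have hconj : (t : ℂ) - conj w = conj ((t : ℂ) - w) := by simp
  rw [hconj, inv_def, inv_def, normSq_conj, conj_conj, ← sub_mul, ← neg_sub, sub_conj,
    ← sq_norm_ofReal_sub, Complex.sq_norm]
  simp

/-- `π` times the Poisson integral of `g` at `t + iε`, written after the substitution
`x = t + ε u`; see `poissonSmoothing_eq_mul_integral`. -/
noncomputable def poissonSmoothing (g : ℝ → ℝ) (ε t : ℝ) : ℝ :=
  ∫ u, g (t + ε * u) * (1 + u ^ 2)⁻¹

lemma poissonSmoothing_zero (g : ℝ → ℝ) (t : ℝ) : poissonSmoothing g 0 t = Real.pi * g t := by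
  simp [poissonSmoothing, integral_const_mul, integral_univ_inv_one_add_sq, mul_comm]

lemma poissonSmoothing_eq_mul_integral (g : ℝ → ℝ) {ε : ℝ} (hε : 0 < ε) (t : ℝ) :
    poissonSmoothing g ε t = ε * ∫ x, g x * ((t - x) ^ 2 + ε ^ 2)⁻¹ := by
  set f : ℝ → ℝ := fun x => g x * ((t - x) ^ 2 + ε ^ 2)⁻¹
  have hf (u : ℝ) : g (t + ε * u) * (1 + u ^ 2)⁻¹ = ε ^ 2 * f (t + ε * u) := by
    simp only [f]
    field_simp
    ring
  calc poissonSmoothing g ε t = ε ^ 2 * ∫ u, f (t + ε * u) := by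
        simp only [poissonSmoothing, hf, integral_const_mul]
    _ = ε ^ 2 * (ε⁻¹ * ∫ x, f (t + x)) := by
        rw [Measure.integral_comp_mul_left (fun x => f (t + x)), abs_of_pos (inv_pos.2 hε),
          smul_eq_mul]
    _ = ε * ∫ x, f x := by
        rw [integral_add_left_eq_self f t]
        field_simp

lemma continuous_poissonSmoothing {g : ℝ → ℝ} (hg : Continuous g) {C : ℝ}
    (hC : ∀ x, |g x| ≤ C) : Continuous fun p : ℝ × ℝ => poissonSmoothing g p.1 p.2 := by
  refine continuous_of_dominated (bound := fun u => C * (1 + u ^ 2)⁻¹) (fun p => ?_)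
    (fun p => ae_of_all _ fun u => ?_) (integrable_inv_one_add_sq.const_mul C)
    (ae_of_all _ fun u => by fun_prop)
  · exact (by fun_prop : Continuous fun u : ℝ => g (p.2 + p.1 * u) * (1 + u ^ 2)⁻¹)
      |>.aestronglyMeasurable
  · rw [norm_mul, Real.norm_eq_abs, Real.norm_of_nonneg (by positivity)]
    gcongr
    exact hC _

lemma abs_poissonSmoothing_le {g : ℝ → ℝ} {C : ℝ} (hC : ∀ x, |g x| ≤ C) (ε t : ℝ) :
    |poissonSmoothing g ε t| ≤ Real.pi * C := by
  rw [← Real.norm_eq_abs, mul_comm, ← integral_univ_inv_one_add_sq, ← integral_const_mul]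
  refine norm_integral_le_of_norm_le (integrable_inv_one_add_sq.const_mul C)
    (ae_of_all _ fun u => ?_)
  rw [norm_mul, Real.norm_eq_abs, Real.norm_of_nonneg (by positivity)]
  gcongr
  exact hC _

lemma sq_mul_abs_poissonSmoothing_le {g : ℝ → ℝ} (hgi : Integrable g) {R : ℝ}
    (hR : ∀ x, g x ≠ 0 → |x| ≤ R) {ε : ℝ} (hε : 0 < ε) (hε1 : ε ≤ 1) {t : ℝ}
    (ht : 2 * R ≤ |t|) : t ^ 2 * |poissonSmoothing g ε t| ≤ 4 * ∫ x, |g x| := by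
  have hIg : 0 ≤ ∫ x, |g x| := integral_nonneg fun x => abs_nonneg (g x)
  rcases eq_or_ne t 0 with rfl | ht0
  · simpa using hIg
  have hk (x : ℝ) : ‖g x * ((t - x) ^ 2 + ε ^ 2)⁻¹‖ ≤ |g x| * (4 / t ^ 2) := by
    rw [norm_mul, Real.norm_eq_abs, Real.norm_of_nonneg (by positivity)]
    rcases eq_or_ne (g x) 0 with hx | hx
    · simp [hx]
    gcongr
    rw [inv_eq_one_div, div_le_div_iff₀ (by positivity) (by positivity)]
    have hfar : |t| / 2 ≤ |t - x| := by linarith [hR x hx, abs_sub_abs_le_abs_sub t x]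
    nlinarith [sq_abs t, sq_abs (t - x), mul_self_le_mul_self (by positivity) hfar]
  calc t ^ 2 * |poissonSmoothing g ε t|
      = t ^ 2 * (ε * ‖∫ x, g x * ((t - x) ^ 2 + ε ^ 2)⁻¹‖) := by
        rw [poissonSmoothing_eq_mul_integral g hε, abs_mul, abs_of_pos hε, Real.norm_eq_abs]
    _ ≤ t ^ 2 * (ε * ∫ x, |g x| * (4 / t ^ 2)) := by
        gcongr
        exact norm_integral_le_of_norm_le (hgi.abs.mul_const _) (ae_of_all _ hk)
    _ = ε * (4 * ∫ x, |g x|) := by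
        rw [integral_mul_const]
        field_simp
    _ ≤ 4 * ∫ x, |g x| := mul_le_of_le_one_left (by positivity) hε1

lemma exists_abs_poissonSmoothing_le {g : ℝ → ℝ} (hg : Continuous g) (hgs : HasCompactSupport g) :
    ∃ C, ∀ ε ∈ Set.Ioc (0 : ℝ) 1, ∀ t, |poissonSmoothing g ε t| ≤ C * (1 + t ^ 2)⁻¹ := by
  obtain ⟨R, hR⟩ := hgs.isCompact.isBounded.subset_closedBall 0
  have hR' (x : ℝ) (hx : g x ≠ 0) : |x| ≤ R := by
    simpa using hR (subset_tsupport g hx)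
  obtain ⟨B, hB⟩ := hgs.exists_bound_of_continuous hg
  have hB0 : 0 ≤ B := (norm_nonneg _).trans (hB 0)
  have hIg : 0 ≤ ∫ x, |g x| := integral_nonneg fun x => abs_nonneg (g x)
  refine ⟨Real.pi * B * (1 + 4 * R ^ 2) + 4 * ∫ x, |g x|, fun ε ⟨hε, hε1⟩ t => ?_⟩
  rw [← div_eq_mul_inv, le_div_iff₀ (by positivity)]
  have hnear := abs_poissonSmoothing_le hB ε t
  have hπB : 0 ≤ Real.pi * B := by positivity
  rcases le_total |t| (2 * R) with ht | ht
  · have ht2 : t ^ 2 ≤ 4 * R ^ 2 := by nlinarith [sq_abs t, abs_nonneg t]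
    nlinarith [abs_nonneg (poissonSmoothing g ε t)]
  · have hfar := sq_mul_abs_poissonSmoothing_le (hg.integrable_of_hasCompactSupport hgs) hR' hε
      hε1 ht
    nlinarith [sq_nonneg R]

section CauchyTransform

variable {σ : Measure ℝ}

lemma memLp_two_inv_one_add_sq (hσ : Integrable (fun t : ℝ => (1 + t ^ 2)⁻¹) σ) :
    MemLp (fun t : ℝ => (1 + t ^ 2)⁻¹) 2 σ := by
  refine memLp_two_of_sq_norm_le hσ (by fun_prop) (ae_of_all _ fun t => ?_)
  have h1 : (1 + t ^ 2)⁻¹ ≤ 1 := inv_le_one_of_one_le₀ (by nlinarith)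
  rw [Real.norm_of_nonneg (by positivity), sq]
  exact mul_le_of_le_one_left (by positivity) h1

lemma memLp_two_inv_ofReal_sub (hσ : Integrable (fun t : ℝ => (1 + t ^ 2)⁻¹) σ) {w : ℂ}
    (hw : w.im ≠ 0) : MemLp (fun t : ℝ => ((t : ℂ) - w)⁻¹) 2 σ := by
  obtain ⟨M, hM⟩ := exists_inv_sub_sq_add_sq_le |w.re| hw
  refine memLp_two_of_sq_norm_le (hσ.const_mul M)
    ((continuous_ofReal.sub continuous_const).inv₀ (ofReal_sub_ne_zero · hw)).aestronglyMeasurable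
    (ae_of_all _ fun t => ?_)
  rw [norm_inv, inv_pow, sq_norm_ofReal_sub]
  exact hM t w.re le_rfl

lemma tendsto_integral_div_ofReal_sub_mul_I (hσ : Integrable (fun t : ℝ => (1 + t ^ 2)⁻¹) σ)
    {z : ℝ → ℂ} (hz : MemLp z 2 σ) :
    Tendsto (fun y : ℝ => ∫ t, z t / ((t : ℂ) - y * I) ∂σ) atTop (𝓝 0) := by
  rw [← integral_zero ℝ ℂ]
  refine tendsto_integral_filter_of_dominated_convergence (fun t => ‖z t‖ * ‖((t : ℂ) - I)⁻¹‖)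
    ?_ ?_ (hz.norm.integrable_mul (memLp_two_inv_ofReal_sub hσ (by simp)).norm) ?_
  · filter_upwards [eventually_gt_atTop 0] with y hy
    exact hz.1.mul ((continuous_ofReal.sub continuous_const).inv₀
      (ofReal_sub_ne_zero · (by simpa using hy.ne'))).aestronglyMeasurable
  · filter_upwards [eventually_ge_atTop 1] with y hy
    refine ae_of_all _ fun t => ?_
    rw [div_eq_mul_inv, norm_mul, norm_inv, norm_inv]
    gcongr
    · exact norm_pos_iff.2 (ofReal_sub_ne_zero t (by simp))
    · refine (pow_le_pow_iff_left₀ (norm_nonneg _) (norm_nonneg _) two_ne_zero).1 ?_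
      rw [sq_norm_ofReal_sub, sq_norm_ofReal_sub]
      simp only [ofReal_re, ofReal_im, I_re, I_im, mul_re, mul_im, mul_zero, mul_one, sub_zero,
        one_pow]
      nlinarith
  · refine ae_of_all _ fun t => ?_
    refine squeeze_zero_norm' ?_ ((tendsto_inv_atTop_zero).const_mul ‖z t‖ |>.trans (by simp))
    filter_upwards [eventually_gt_atTop 0] with y hy
    rw [norm_div, div_eq_mul_inv]
    gcongr
    simpa [abs_of_pos hy] using abs_im_le_norm ((t : ℂ) - y * I)

lemma integral_mul_inv_sub_sq_add_sq_eq_zero (hσ : Integrable (fun t : ℝ => (1 + t ^ 2)⁻¹) σ)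
    {z : ℝ → ℂ} (hz : MemLp z 2 σ)
    (h0 : ∀ w : ℂ, w.im ≠ 0 → ∫ t, z t / ((t : ℂ) - w) ∂σ = 0) (x : ℝ) {ε : ℝ} (hε : ε ≠ 0) :
    ∫ t, z t * (((t - x) ^ 2 + ε ^ 2)⁻¹ : ℝ) ∂σ = 0 := by
  set w : ℂ := x + ε * I
  have hw : w.im ≠ 0 := by simpa [w] using hε
  have hw' : (conj w).im ≠ 0 := by simpa using hw
  have hint {v : ℂ} (hv : v.im ≠ 0) : Integrable (fun t : ℝ => z t / ((t : ℂ) - v)) σ := by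
    simp only [div_eq_mul_inv]
    exact hz.integrable_mul (memLp_two_inv_ofReal_sub hσ hv)
  have hsub : ∫ t, (z t / ((t : ℂ) - w) - z t / ((t : ℂ) - conj w)) ∂σ = 0 := by
    rw [integral_sub (hint hw) (hint hw'), h0 w hw, h0 _ hw', sub_zero]
  have hres (t : ℝ) : z t / ((t : ℂ) - w) - z t / ((t : ℂ) - conj w)
      = 2 * ε * I * (z t * (((t - x) ^ 2 + ε ^ 2)⁻¹ : ℝ)) := by
    rw [div_eq_mul_inv, div_eq_mul_inv, ← mul_sub, inv_ofReal_sub_sub_inv_ofReal_sub_conj]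
    simp only [w, add_re, add_im, ofReal_re, ofReal_im, mul_re, mul_im, I_re, I_im]
    push_cast
    ring
  simp_rw [hres, integral_const_mul] at hsub
  exact (mul_eq_zero.1 hsub).resolve_left (by simp [hε])

lemma integral_mul_integral_inv_sub_sq_add_sq_eq_zero
    (hσ : Integrable (fun t : ℝ => (1 + t ^ 2)⁻¹) σ) {z : ℝ → ℂ} (hz : MemLp z 2 σ) {ε : ℝ}
    (hε : ε ≠ 0) (hK : ∀ x, ∫ t, z t * (((t - x) ^ 2 + ε ^ 2)⁻¹ : ℝ) ∂σ = 0) {g : ℝ → ℝ}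
    (hg : Continuous g) (hgs : HasCompactSupport g) :
    ∫ t, z t * (∫ x, g x * ((t - x) ^ 2 + ε ^ 2)⁻¹ : ℝ) ∂σ = 0 := by
  have := isFiniteMeasureOnCompacts_of_integrable_of_pos continuous_inv_one_add_sq
    (fun t => by positivity) hσ
  set F : ℝ → ℝ → ℂ := fun t x => z t * ((g x * ((t - x) ^ 2 + ε ^ 2)⁻¹ : ℝ) : ℂ)
  obtain ⟨R, hR⟩ := hgs.isCompact.isBounded.subset_closedBall 0
  obtain ⟨M, hM⟩ := exists_inv_sub_sq_add_sq_le R hε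
  have hFint : Integrable (Function.uncurry F) (σ.prod volume) := by
    refine ((hz.norm.integrable_mul ((memLp_two_inv_one_add_sq hσ).const_mul M)).mul_prod
      (hg.integrable_of_hasCompactSupport hgs).norm).mono' ?_ (ae_of_all _ fun p => ?_)
    · have hkernel : Continuous fun p : ℝ × ℝ => ((p.1 - p.2) ^ 2 + ε ^ 2)⁻¹ :=
        (by fun_prop : Continuous fun p : ℝ × ℝ => (p.1 - p.2) ^ 2 + ε ^ 2).inv₀
          fun p => by positivity
      exact hz.1.comp_fst.mul (by fun_prop : Continuous fun p : ℝ × ℝ =>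
        ((g p.2 * ((p.1 - p.2) ^ 2 + ε ^ 2)⁻¹ : ℝ) : ℂ)).aestronglyMeasurable
    · obtain ⟨t, x⟩ := p
      simp only [Function.uncurry, F, Pi.mul_apply, norm_mul, norm_real, Real.norm_eq_abs,
        abs_inv, abs_of_nonneg (by positivity : 0 ≤ (t - x) ^ 2 + ε ^ 2)]
      rcases eq_or_ne (g x) 0 with hx | hx
      · simp [hx]
      have hxR : |x| ≤ R := by simpa using hR (subset_tsupport g hx)
      calc ‖z t‖ * (|g x| * ((t - x) ^ 2 + ε ^ 2)⁻¹)
          ≤ ‖z t‖ * (|g x| * (M * (1 + t ^ 2)⁻¹)) := by gcongr; exact hM t x hxR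
        _ = ‖z t‖ * (M * (1 + t ^ 2)⁻¹) * |g x| := by ring
  calc ∫ t, z t * (∫ x, g x * ((t - x) ^ 2 + ε ^ 2)⁻¹ : ℝ) ∂σ = ∫ t, (∫ x, F t x) ∂σ := by
        simp only [F, integral_const_mul, integral_complex_ofReal]
    _ = ∫ x, ∫ t, F t x ∂σ := integral_integral_swap hFint
    _ = 0 := by
        have hF (t x : ℝ) : F t x = g x * (z t * (((t - x) ^ 2 + ε ^ 2)⁻¹ : ℝ)) := by
          simp only [F]; push_cast; ring
        simp only [hF, integral_const_mul, hK, mul_zero, integral_zero]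

lemma integral_mul_eq_zero_of_integral_div_ofReal_sub_eq_zero
    (hσ : Integrable (fun t : ℝ => (1 + t ^ 2)⁻¹) σ) {z : ℝ → ℂ} (hz : MemLp z 2 σ)
    (h0 : ∀ w : ℂ, w.im ≠ 0 → ∫ t, z t / ((t : ℂ) - w) ∂σ = 0) {g : ℝ → ℝ} (hg : Continuous g)
    (hgs : HasCompactSupport g) : ∫ t, z t * g t ∂σ = 0 := by
  have hsmooth : ∀ ε > 0, ∫ t, z t * (poissonSmoothing g ε t : ℂ) ∂σ = 0 := by
    intro ε hε
    simp_rw [poissonSmoothing_eq_mul_integral g hε, ofReal_mul, mul_left_comm _ (ε : ℂ),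
      integral_const_mul, integral_mul_integral_inv_sub_sq_add_sq_eq_zero hσ hz hε.ne'
        (fun x => integral_mul_inv_sub_sq_add_sq_eq_zero hσ hz h0 x hε.ne') hg hgs, mul_zero]
  obtain ⟨C, hC⟩ := exists_abs_poissonSmoothing_le hg hgs
  obtain ⟨B, hB⟩ := hgs.exists_bound_of_continuous hg
  have hcont := continuous_poissonSmoothing hg hB
  have hlim : Tendsto (fun ε => ∫ t, z t * (poissonSmoothing g ε t : ℂ) ∂σ) (𝓝[>] 0)
      (𝓝 (∫ t, z t * (poissonSmoothing g 0 t : ℂ) ∂σ)) := by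
    refine tendsto_integral_filter_of_dominated_convergence
      (fun t => ‖z t‖ * (C * (1 + t ^ 2)⁻¹)) (Eventually.of_forall fun ε => hz.1.mul ?_) ?_
      (hz.norm.integrable_mul ((memLp_two_inv_one_add_sq hσ).const_mul C))
      (ae_of_all _ fun t => ?_)
    · exact (continuous_ofReal.comp (hcont.comp (Continuous.prodMk_right ε))).aestronglyMeasurable
    · filter_upwards [Ioc_mem_nhdsGT zero_lt_one] with ε hε
      refine ae_of_all _ fun t => ?_
      rw [norm_mul, norm_real, Real.norm_eq_abs]
      gcongr
      exact hC ε hε t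
    · refine Tendsto.const_mul _ ((continuous_ofReal.tendsto _).comp ?_)
      exact (hcont.comp (Continuous.prodMk_left t)).continuousAt.tendsto.mono_left
        nhdsWithin_le_nhds
  have hπ := tendsto_nhds_unique hlim
    (tendsto_const_nhds.congr' (eventually_nhdsWithin_of_forall fun ε hε => (hsmooth ε hε).symm))
  simp_rw [poissonSmoothing_zero, ofReal_mul, mul_left_comm _ (Real.pi : ℂ), integral_const_mul]
    at hπ
  exact (mul_eq_zero.1 hπ).resolve_left (by exact_mod_cast Real.pi_ne_zero)

lemma ae_eq_zero_of_integral_div_ofReal_sub_eq_zero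
    (hσ : Integrable (fun t : ℝ => (1 + t ^ 2)⁻¹) σ) {z : ℝ → ℂ} (hz : MemLp z 2 σ)
    (h0 : ∀ w : ℂ, w.im ≠ 0 → ∫ t, z t / ((t : ℂ) - w) ∂σ = 0) : ∀ᵐ t ∂σ, z t = 0 := by
  have := isFiniteMeasureOnCompacts_of_integrable_of_pos continuous_inv_one_add_sq
    (fun t => by positivity) hσ
  refine ae_eq_zero_of_integral_contDiff_smul_eq_zero (hz.locallyIntegrable one_le_two)
    fun g hg hgs => ?_
  simpa only [real_smul, mul_comm] using
    integral_mul_eq_zero_of_integral_div_ofReal_sub_eq_zero hσ hz h0 hg.continuous hgs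

end CauchyTransform

/-- if `∫ z(t)/(t−λ) dσ(t)` is a constant `c` for all non-real `λ`, then
`z = 0` σ-a.e. and `c = 0` (Stieltjes–Perron inversion). -/
theorem stieltjes_perron_vanishing (σ : Measure ℝ)
    (hσ : Integrable (fun t : ℝ => (1 + t ^ 2)⁻¹) σ)
    (z : Lp ℂ 2 σ) (c : ℂ)
    (hc : ∀ lam : ℂ, lam.im ≠ 0 → ∫ t : ℝ, z t / ((t : ℂ) - lam) ∂σ = c) :
    (∀ᵐ t ∂σ, z t = 0) ∧ c = 0 := by
  have hz : MemLp z 2 σ := Lp.memLp z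
  have hc0 : c = 0 := by
    refine tendsto_nhds_unique (tendsto_const_nhds.congr' ?_)
      (tendsto_integral_div_ofReal_sub_mul_I hσ hz)
    filter_upwards [eventually_gt_atTop 0] with y hy
    exact (hc _ (by simpa using hy.ne')).symm
  exact ⟨ae_eq_zero_of_integral_div_ofReal_sub_eq_zero hσ hz fun w hw => (hc w hw).trans hc0, hc0⟩
end

section
/- Let A be a densely defined, closed symmetric operator in a separable Hilbert space H with boundary triplet {ℂ, Γ₀, Γ₁} for A*. Let σ be a positive Borel measure on ℝ with ∫ dσ(t)/(1+t²) < ∞, let h₀ > 0 and h ∈ ℝ. Define H̃ = H ⊕ L²(ℝ, dσ) ⊕ ℂ with inner product ⟨x̃, ỹ⟩ = ⟨x₀,y₀⟩_H + ∫ x₁(t)·conj(y₁(t)) dσ(t) + x₂·conj(y₂)/h₀, and the operator à by Ãx̃ = (A*x₀, t·x₁(t) − Γ₀x₀, Γ₁x₀ + h·Γ₀x₀ + ∫ (x₁(t) − (t/(1+t²))Γ₀x₀) dσ(t)) on the domain {x̃ : x₀ ∈ D(A*), t·x₁(t) − Γ₀x₀ ∈ L²(ℝ, dσ), x₂ = −h₀·Γ₀x₀}.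 Then à is self-adjoint. -/
/-!
Symmetry of `Ã` is a direct computation: Green's identity takes care of the `H`-component, and
for the `L²(σ)`-component
`∫ conj(t f - a) g - ∫ conj f (t g - b) = conj (∫ (f - φ a)) b - conj a ∫ (g - φ b)`,
`φ t = t / (1 + t²)`, produces exactly the regularised integrals of the third component.

Conversely, let `⟨Ãx̃, ỹ⟩ = ⟨x̃, z̃⟩` for all `x̃ ∈ D(Ã)`. Testing with `x̃ = (u, 0, 0)`,
`u ∈ D(A) ⊆ ker Γ₀ ∩ ker Γ₁`, gives `y₀ ∈ D(A*)` and `z₀ = A* y₀`; testing with `x₀` such that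
`(Γ₀ x₀, Γ₁ x₀) = (0, 1)` gives `y₂ = -h₀ Γ₀ y₀`; testing with `x̃ = (0, g / (1 + t²), 0)`,
`g = t y₁ + y₂ / h₀ - z₁`, gives `∫ |g|² / (1 + t²) dσ = 0`, so `z₁ = t y₁ - Γ₀ y₀`. Hence
`ỹ ∈ D(Ã)`, and comparing with the symmetry identity at an `x̃` with `Γ₀ x₀ = 1` identifies `z₂`.
-/

open MeasureTheory LinearPMap
open scoped InnerProductSpace ComplexConjugate

section LpTwo

variable {α : Type*} [MeasurableSpace α] {μ : Measure α}

theorem MeasureTheory.Integrable.conj {f : α → ℂ} (hf : Integrable f μ) :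
    Integrable (fun t => conj (f t)) μ :=
  memLp_one_iff_integrable.1 (memLp_one_iff_integrable.2 hf).star

theorem MeasureTheory.MemLp.mul_of_norm_le_one {m f : α → ℂ} {p : ENNReal}
    (hm : AEStronglyMeasurable m μ) (hm₁ : ∀ t, ‖m t‖ ≤ 1) (hf : MemLp f p μ) :
    MemLp (fun t => m t * f t) p μ :=
  hf.of_le_mul (c := 1) (hm.mul hf.1) <| .of_forall fun t => by
    rw [norm_mul, one_mul]
    exact mul_le_of_le_one_left (norm_nonneg _) (hm₁ t)

theorem integrable_conj_mul {f g : α → ℂ} (hf : MemLp f 2 μ) (hg : MemLp g 2 μ) :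
    Integrable (fun t => conj (f t) * g t) μ :=
  hf.star.integrable_mul hg

theorem memLp_two_of_sq_norm_le_s10 {f : α → ℂ} {w : α → ℝ} (hf : AEStronglyMeasurable f μ)
    (hw : Integrable w μ) (hfw : ∀ t, ‖f t‖ ^ 2 ≤ w t) : MemLp f 2 μ :=
  (memLp_two_iff_integrable_sq_norm hf).2 <| hw.mono' (hf.norm.pow 2) <|
    .of_forall fun t => by simpa [abs_of_nonneg (sq_nonneg ‖f t‖)] using hfw t

end LpTwo

section Weights

theorem one_add_sq_ne_zero (t : ℝ) : (1 : ℂ) + (t : ℂ) ^ 2 ≠ 0 := by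
  norm_cast; positivity

theorem conj_inv_one_add_sq (t : ℝ) :
    conj (((1 : ℂ) + (t : ℂ) ^ 2)⁻¹) = ((1 : ℂ) + (t : ℂ) ^ 2)⁻¹ := by
  norm_cast; exact Complex.conj_ofReal _

theorem conj_div_one_add_sq (t : ℝ) :
    conj ((t : ℂ) / (1 + (t : ℂ) ^ 2)) = (t : ℂ) / (1 + (t : ℂ) ^ 2) := by
  norm_cast; exact Complex.conj_ofReal _

theorem norm_inv_one_add_sq (t : ℝ) : ‖((1 : ℂ) + (t : ℂ) ^ 2)⁻¹‖ = (1 + t ^ 2)⁻¹ := by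
  norm_cast; rw [norm_inv, Real.norm_of_nonneg (by positivity)]

theorem norm_div_one_add_sq (t : ℝ) :
    ‖(t : ℂ) / (1 + (t : ℂ) ^ 2)‖ = |t| / (1 + t ^ 2) := by
  norm_cast; rw [norm_div, Real.norm_eq_abs, Real.norm_of_nonneg (by positivity)]

theorem norm_inv_one_add_sq_le_one (t : ℝ) : ‖((1 : ℂ) + (t : ℂ) ^ 2)⁻¹‖ ≤ 1 := by
  rw [norm_inv_one_add_sq]
  exact inv_le_one_of_one_le₀ (by nlinarith)

theorem norm_div_one_add_sq_le_one (t : ℝ) : ‖(t : ℂ) / (1 + (t : ℂ) ^ 2)‖ ≤ 1 := by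
  rw [norm_div_one_add_sq, div_le_one (by positivity)]
  nlinarith [abs_nonneg t, sq_abs t]

theorem norm_mul_div_one_add_sq_le_one (t : ℝ) :
    ‖(t : ℂ) * ((t : ℂ) / (1 + (t : ℂ) ^ 2))‖ ≤ 1 := by
  rw [norm_mul, norm_div_one_add_sq, Complex.norm_real, Real.norm_eq_abs, ← mul_div_assoc, ← sq,
    sq_abs, div_le_one (by positivity)]
  linarith

end Weights

section MultiplicationOperator

variable {σ : Measure ℝ}

theorem memLp_inv_one_add_sq (hσ : Integrable (fun t : ℝ => (1 + t ^ 2)⁻¹) σ) :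
    MemLp (fun t : ℝ => ((1 : ℂ) + (t : ℂ) ^ 2)⁻¹) 2 σ :=
  memLp_two_of_sq_norm_le_s10 (by fun_prop : Measurable _).aestronglyMeasurable hσ fun t => by
    rw [sq, ← norm_inv_one_add_sq t]
    exact mul_le_of_le_one_left (norm_nonneg _) (norm_inv_one_add_sq_le_one t)

theorem memLp_div_one_add_sq (hσ : Integrable (fun t : ℝ => (1 + t ^ 2)⁻¹) σ) :
    MemLp (fun t : ℝ => (t : ℂ) / (1 + (t : ℂ) ^ 2)) 2 σ :=
  memLp_two_of_sq_norm_le_s10 (by fun_prop : Measurable _).aestronglyMeasurable hσ fun t => by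
    rw [norm_div_one_add_sq, div_pow, sq_abs, div_le_iff₀ (by positivity)]
    field_simp
    nlinarith

theorem integrable_sub_div_one_add_sq_mul (hσ : Integrable (fun t : ℝ => (1 + t ^ 2)⁻¹) σ)
    {f : ℝ → ℂ} {a : ℂ} (hf : MemLp f 2 σ)
    (hfa : MemLp (fun t : ℝ => (t : ℂ) * f t - a) 2 σ) :
    Integrable (fun t : ℝ => f t - (t : ℂ) / (1 + (t : ℂ) ^ 2) * a) σ := by
  refine ((memLp_inv_one_add_sq hσ).integrable_mul hf |>.add <|
    (memLp_div_one_add_sq hσ).integrable_mul hfa).congr (.of_forall fun t => ?_)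
  have := one_add_sq_ne_zero t
  simp only [Pi.add_apply, Pi.mul_apply]
  field_simp
  ring

theorem integral_conj_mul_sub_integral_conj_mul
    (hσ : Integrable (fun t : ℝ => (1 + t ^ 2)⁻¹) σ) {f g : ℝ → ℂ} {a b : ℂ}
    (hf : MemLp f 2 σ) (hg : MemLp g 2 σ) (hfa : MemLp (fun t : ℝ => (t : ℂ) * f t - a) 2 σ)
    (hgb : MemLp (fun t : ℝ => (t : ℂ) * g t - b) 2 σ) :
    (∫ t, conj ((t : ℂ) * f t - a) * g t ∂σ) - ∫ t, conj (f t) * ((t : ℂ) * g t - b) ∂σ =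
      conj (∫ t, (f t - (t : ℂ) / (1 + (t : ℂ) ^ 2) * a) ∂σ) * b -
        conj a * ∫ t, (g t - (t : ℂ) / (1 + (t : ℂ) ^ 2) * b) ∂σ := by
  rw [← integral_sub (integrable_conj_mul hfa hg) (integrable_conj_mul hf hgb), ← integral_conj,
    ← integral_mul_const, ← integral_const_mul, ← integral_sub
      ((integrable_sub_div_one_add_sq_mul hσ hf hfa).conj.mul_const b)
      ((integrable_sub_div_one_add_sq_mul hσ hg hgb).const_mul _)]
  refine integral_congr_ae (.of_forall fun t => ?_)
  simp only [_root_.map_sub, map_mul, Complex.conj_ofReal, conj_div_one_add_sq]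
  ring

theorem memLp_mul_mul_add_sub {m y z : ℝ → ℂ} (hm : MemLp m 2 σ) (hm₁ : ∀ t, ‖m t‖ ≤ 1)
    (htm : AEStronglyMeasurable (fun t : ℝ => (t : ℂ) * m t) σ)
    (htm₁ : ∀ t : ℝ, ‖(t : ℂ) * m t‖ ≤ 1) (hy : MemLp y 2 σ) (hz : MemLp z 2 σ) (c : ℂ) :
    MemLp (fun t : ℝ => m t * ((t : ℂ) * y t + c - z t)) 2 σ :=
  (((hy.mul_of_norm_le_one htm htm₁).add (hm.const_mul c)).sub
    (hz.mul_of_norm_le_one hm.1 hm₁)).ae_eq <| .of_forall fun t => by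
      simp only [Pi.add_apply, Pi.sub_apply]
      ring

theorem ae_eq_zero_of_integral_conj_inv_one_add_sq_mul {g : ℝ → ℂ}
    (hg : Integrable (fun t : ℝ => conj (((1 : ℂ) + (t : ℂ) ^ 2)⁻¹ * g t) * g t) σ)
    (h : ∫ t, conj (((1 : ℂ) + (t : ℂ) ^ 2)⁻¹ * g t) * g t ∂σ = 0) : g =ᵐ[σ] 0 := by
  have hreal (t : ℝ) : conj (((1 : ℂ) + (t : ℂ) ^ 2)⁻¹ * g t) * g t =
      (((1 + t ^ 2)⁻¹ * ‖g t‖ ^ 2 : ℝ) : ℂ) := by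
    rw [map_mul, mul_assoc, Complex.conj_mul', conj_inv_one_add_sq]
    push_cast
    rfl
  simp_rw [hreal] at hg h
  rw [integral_complex_ofReal, Complex.ofReal_eq_zero] at h
  have hr := (integral_eq_zero_iff_of_nonneg (f := fun t : ℝ => (1 + t ^ 2)⁻¹ * ‖g t‖ ^ 2)
    (fun t => by dsimp; positivity) (hg.re.congr (.of_forall fun t => Complex.ofReal_re _))).1 h
  filter_upwards [hr] with t ht
  simpa [(by positivity : (0 : ℝ) < 1 + t ^ 2).ne'] using ht

theorem ae_eq_mul_add_of_forall_integral (hσ : Integrable (fun t : ℝ => (1 + t ^ 2)⁻¹) σ)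
    {y z : ℝ → ℂ} {c : ℂ} (hy : MemLp y 2 σ) (hz : MemLp z 2 σ)
    (H : ∀ f : ℝ → ℂ, MemLp f 2 σ → MemLp (fun t : ℝ => (t : ℂ) * f t) 2 σ →
      (∫ t, conj ((t : ℂ) * f t) * y t ∂σ) + conj (∫ t, f t ∂σ) * c =
        ∫ t, conj (f t) * z t ∂σ) :
    ∀ᵐ t ∂σ, z t = t * y t + c := by
  set g : ℝ → ℂ := fun t => t * y t + c - z t
  set f : ℝ → ℂ := fun t => ((1 : ℂ) + (t : ℂ) ^ 2)⁻¹ * g t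
  have hf : MemLp f 2 σ :=
    memLp_mul_mul_add_sub (memLp_inv_one_add_sq hσ) norm_inv_one_add_sq_le_one
      (by fun_prop : Measurable _).aestronglyMeasurable
      (fun t => by simpa [div_eq_mul_inv] using norm_div_one_add_sq_le_one t) hy hz c
  have htf : MemLp (fun t : ℝ => (t : ℂ) * f t) 2 σ := by
    refine (memLp_mul_mul_add_sub (memLp_div_one_add_sq hσ) norm_div_one_add_sq_le_one
      (by fun_prop : Measurable _).aestronglyMeasurable norm_mul_div_one_add_sq_le_one
      hy hz c).ae_eq (.of_forall fun t => ?_)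
    simp only [f, g, div_eq_mul_inv, mul_assoc]
  have hfint : Integrable f σ := by
    simpa using integrable_sub_div_one_add_sq_mul hσ hf (a := 0) (by simpa using htf)
  have hI₁ := integrable_conj_mul htf hy
  have hI₂ := hfint.conj.mul_const c
  have hI₃ := integrable_conj_mul hf hz
  have hsplit (t : ℝ) :
      conj (f t) * g t = conj ((t : ℂ) * f t) * y t + conj (f t) * c - conj (f t) * z t := by
    simp only [map_mul, g, Complex.conj_ofReal]
    ring
  have hint : Integrable (fun t => conj (f t) * g t) σ :=
    ((hI₁.add hI₂).sub hI₃).congr (.of_forall fun t => (hsplit t).symm)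
  have hzero : ∫ t, conj (f t) * g t ∂σ = 0 := by
    have key := H f hf htf
    rw [← integral_conj, ← integral_mul_const] at key
    simp_rw [hsplit]
    rw [integral_sub (by exact hI₁.add hI₂) hI₃, integral_add hI₁ hI₂, key, sub_self]
  filter_upwards [ae_eq_zero_of_integral_conj_inv_one_add_sq_mul hint hzero] with t ht
  have ht : g t = 0 := ht
  linear_combination -ht

end MultiplicationOperator

section BoundaryTriplet

variable {H : Type*} [NormedAddCommGroup H] [InnerProductSpace ℂ H] [CompleteSpace H]

theorem LinearPMap.exists_mem_adjoint_domain_of_inner_eq {T : H →ₗ.[ℂ] H}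
    (hT : Dense (T.domain : Set H)) {y z : H}
    (h : ∀ u : T.domain, ⟪T u, y⟫_ℂ = ⟪(u : H), z⟫_ℂ) :
    ∃ hy : y ∈ T†.domain, T† ⟨y, hy⟩ = z := by
  have h' (u : T.domain) : ⟪z, (u : H)⟫_ℂ = ⟪y, T u⟫_ℂ := by
    rw [← inner_conj_symm, ← h, inner_conj_symm]
  exact ⟨mem_adjoint_domain_of_exists y ⟨z, h'⟩, adjoint_apply_eq hT _ h'⟩

structure IsBoundaryTriplet (A : H →ₗ.[ℂ] H) (Γ₀ Γ₁ : A†.domain →ₗ[ℂ] ℂ) : Prop where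
  green : ∀ x y : A†.domain, ⟪(A† x : H), (y : H)⟫_ℂ - ⟪(x : H), (A† y : H)⟫_ℂ =
    conj (Γ₁ x) * Γ₀ y - conj (Γ₀ x) * Γ₁ y
  surjective : Function.Surjective fun x : A†.domain => (Γ₀ x, Γ₁ x)

theorem IsBoundaryTriplet.eq_zero_of_mem_domain {A : H →ₗ.[ℂ] H} {Γ₀ Γ₁ : A†.domain →ₗ[ℂ] ℂ}
    (hΓ : IsBoundaryTriplet A Γ₀ Γ₁) (hdense : Dense (A.domain : Set H)) (hsym : A ≤ A†)
    (u : A.domain) : Γ₀ ⟨u, hsym.1 u.2⟩ = 0 ∧ Γ₁ ⟨u, hsym.1 u.2⟩ = 0 := by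
  have hform (v : A†.domain) :
      conj (Γ₁ ⟨u, hsym.1 u.2⟩) * Γ₀ v - conj (Γ₀ ⟨u, hsym.1 u.2⟩) * Γ₁ v = 0 := by
    rw [← hΓ.green, ← hsym.2 rfl, ← inner_conj_symm, ← adjoint_isFormalAdjoint hdense v u,
      inner_conj_symm, sub_self]
  obtain ⟨v₀, hv₀⟩ := hΓ.surjective (0, 1)
  obtain ⟨v₁, hv₁⟩ := hΓ.surjective (1, 0)
  simp only [Prod.mk.injEq] at hv₀ hv₁
  have h₀ := hform v₀
  have h₁ := hform v₁
  rw [hv₀.1, hv₀.2] at h₀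
  rw [hv₁.1, hv₁.2] at h₁
  simpa using And.intro h₀ h₁

end BoundaryTriplet

section ExtendedOperator

variable {H : Type*} [NormedAddCommGroup H] [InnerProductSpace ℂ H]

/-- The inner product `⟨x̃, ỹ⟩` of `H̃ = H ⊕ L²(σ) ⊕ ℂ`. -/
noncomputable def extInner (σ : Measure ℝ) (h₀ : ℝ) (x₀ : H) (x₁ : ℝ → ℂ) (x₂ : ℂ) (y₀ : H)
    (y₁ : ℝ → ℂ) (y₂ : ℂ) : ℂ :=
  ⟪x₀, y₀⟫_ℂ + (∫ t : ℝ, conj (x₁ t) * y₁ t ∂σ) + conj x₂ * y₂ / (h₀ : ℂ)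

/-- The third component of `Ã (x, f, -h₀ Γ₀ x)`. -/
noncomputable def extBoundary {D : Type*} [AddCommGroup D] [Module ℂ D] (σ : Measure ℝ)
    (Γ₀ Γ₁ : D →ₗ[ℂ] ℂ) (h : ℝ) (x : D) (f : ℝ → ℂ) : ℂ :=
  Γ₁ x + (h : ℂ) * Γ₀ x + ∫ t : ℝ, (f t - ((t : ℂ) / (1 + (t : ℂ) ^ 2)) * Γ₀ x) ∂σ

theorem extInner_congr_ae {σ : Measure ℝ} {h₀ : ℝ} {x₀ y₀ : H} {x₂ y₂ : ℂ}
    {x₁ x₁' y₁ y₁' : ℝ → ℂ} (hx : x₁ =ᵐ[σ] x₁') (hy : y₁ =ᵐ[σ] y₁') :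
    extInner σ h₀ x₀ x₁ x₂ y₀ y₁ y₂ = extInner σ h₀ x₀ x₁' x₂ y₀ y₁' y₂ := by
  unfold extInner
  congr 2
  exact integral_congr_ae (by filter_upwards [hx, hy] with t hxt hyt; rw [hxt, hyt])

theorem extBoundary_congr_ae {D : Type*} [AddCommGroup D] [Module ℂ D] {σ : Measure ℝ}
    {Γ₀ Γ₁ : D →ₗ[ℂ] ℂ} {h : ℝ} {x : D} {f f' : ℝ → ℂ} (hf : f =ᵐ[σ] f') :
    extBoundary σ Γ₀ Γ₁ h x f = extBoundary σ Γ₀ Γ₁ h x f' := by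
  unfold extBoundary
  congr 1
  exact integral_congr_ae (by filter_upwards [hf] with t ht; rw [ht])

variable [CompleteSpace H]

theorem extInner_symmetric {A : H →ₗ.[ℂ] H} {Γ₀ Γ₁ : A†.domain →ₗ[ℂ] ℂ}
    (hΓ : IsBoundaryTriplet A Γ₀ Γ₁) {σ : Measure ℝ}
    (hσ : Integrable (fun t : ℝ => (1 + t ^ 2)⁻¹) σ) {h₀ : ℝ} (hh₀ : h₀ ≠ 0) (h : ℝ)
    (x y : A†.domain) {f g : ℝ → ℂ} (hf : MemLp f 2 σ) (hg : MemLp g 2 σ)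
    (hfx : MemLp (fun t : ℝ => (t : ℂ) * f t - Γ₀ x) 2 σ)
    (hgy : MemLp (fun t : ℝ => (t : ℂ) * g t - Γ₀ y) 2 σ) :
    extInner σ h₀ (A† x) (fun t => (t : ℂ) * f t - Γ₀ x) (extBoundary σ Γ₀ Γ₁ h x f)
        y g (-(h₀ : ℂ) * Γ₀ y) =
      extInner σ h₀ (x : H) f (-(h₀ : ℂ) * Γ₀ x) (A† y) (fun t => (t : ℂ) * g t - Γ₀ y)
        (extBoundary σ Γ₀ Γ₁ h y g) := by
  have hh₀' : (h₀ : ℂ) ≠ 0 := by exact_mod_cast hh₀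
  have hdiv (a b : ℂ) : a * (-(h₀ : ℂ) * b) / h₀ = -(a * b) := by field_simp
  have hdiv' (a b : ℂ) : conj (-(h₀ : ℂ) * a) * b / h₀ = -(conj a * b) := by
    rw [map_mul, _root_.map_neg, Complex.conj_ofReal]
    field_simp
  unfold extInner extBoundary
  rw [hdiv, hdiv']
  simp only [_root_.map_add, map_mul, Complex.conj_ofReal]
  linear_combination hΓ.green x y + integral_conj_mul_sub_integral_conj_mul hσ hf hg hfx hgy

/-- `(ỹ, z̃)` lies in the graph of `Ã*`. -/
def IsAdjointPair (A : H →ₗ.[ℂ] H) (Γ₀ Γ₁ : A†.domain →ₗ[ℂ] ℂ) (σ : Measure ℝ) (h₀ h : ℝ)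
    (y₀ z₀ : H) (y₁ z₁ : Lp ℂ 2 σ) (y₂ z₂ : ℂ) : Prop :=
  ∀ (x₀ : H) (hx₀ : x₀ ∈ A†.domain) (x₁ : Lp ℂ 2 σ) (x₂ : ℂ),
    MemLp (fun t : ℝ => (t : ℂ) * x₁ t - Γ₀ ⟨x₀, hx₀⟩) 2 σ → x₂ = -(h₀ : ℂ) * Γ₀ ⟨x₀, hx₀⟩ →
    extInner σ h₀ (A† ⟨x₀, hx₀⟩) (fun t => (t : ℂ) * x₁ t - Γ₀ ⟨x₀, hx₀⟩)
        (extBoundary σ Γ₀ Γ₁ h ⟨x₀, hx₀⟩ x₁) y₀ y₁ y₂ =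
      extInner σ h₀ x₀ x₁ x₂ z₀ z₁ z₂

end ExtendedOperator

namespace IsAdjointPair

variable {H : Type*} [NormedAddCommGroup H] [InnerProductSpace ℂ H] [CompleteSpace H]
  {A : H →ₗ.[ℂ] H} {Γ₀ Γ₁ : A†.domain →ₗ[ℂ] ℂ} {σ : Measure ℝ} {h₀ h : ℝ} {y₀ z₀ : H}
  {y₁ z₁ : Lp ℂ 2 σ} {y₂ z₂ : ℂ}

theorem apply (hyp : IsAdjointPair A Γ₀ Γ₁ σ h₀ h y₀ z₀ y₁ z₁ y₂ z₂) (x : A†.domain)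
    {f : ℝ → ℂ} (hf : MemLp f 2 σ) (hfx : MemLp (fun t : ℝ => (t : ℂ) * f t - Γ₀ x) 2 σ) :
    extInner σ h₀ (A† x) (fun t => (t : ℂ) * f t - Γ₀ x) (extBoundary σ Γ₀ Γ₁ h x f)
        y₀ y₁ y₂ =
      extInner σ h₀ (x : H) f (-(h₀ : ℂ) * Γ₀ x) z₀ z₁ z₂ := by
  obtain ⟨x₀, hx₀⟩ := x
  have hfx' : (fun t : ℝ => (t : ℂ) * hf.toLp f t - Γ₀ ⟨x₀, hx₀⟩) =ᵐ[σ]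
      fun t => (t : ℂ) * f t - Γ₀ ⟨x₀, hx₀⟩ := by
    filter_upwards [hf.coeFn_toLp] with t ht
    rw [ht]
  have := hyp x₀ hx₀ (hf.toLp f) _ (hfx.ae_eq hfx'.symm) rfl
  rwa [extInner_congr_ae hfx' .rfl, extBoundary_congr_ae hf.coeFn_toLp,
    extInner_congr_ae hf.coeFn_toLp .rfl] at this

theorem inner_add_eq (hyp : IsAdjointPair A Γ₀ Γ₁ σ h₀ h y₀ z₀ y₁ z₁ y₂ z₂) (x : A†.domain)
    (hx : Γ₀ x = 0) : ⟪(A† x : H), y₀⟫_ℂ + conj (Γ₁ x) * y₂ / h₀ = ⟪(x : H), z₀⟫_ℂ := by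
  simpa [extInner, extBoundary, hx] using hyp.apply x (f := 0) .zero (by simp [hx])

theorem exists_mem_adjoint_domain (hyp : IsAdjointPair A Γ₀ Γ₁ σ h₀ h y₀ z₀ y₁ z₁ y₂ z₂)
    (hΓ : IsBoundaryTriplet A Γ₀ Γ₁) (hdense : Dense (A.domain : Set H)) (hsym : A ≤ A†) :
    ∃ hy : y₀ ∈ A†.domain, A† ⟨y₀, hy⟩ = z₀ :=
  exists_mem_adjoint_domain_of_inner_eq hdense fun u => by
    obtain ⟨h0, h1⟩ := hΓ.eq_zero_of_mem_domain hdense hsym u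
    have hAu : A† ⟨u, hsym.1 u.2⟩ = A u := (hsym.2 (x := u) (y := ⟨u, hsym.1 u.2⟩) rfl).symm
    simpa [h1, hAu] using hyp.inner_add_eq ⟨u, hsym.1 u.2⟩ h0

theorem eq_neg_mul_Γ₀ (hyp : IsAdjointPair A Γ₀ Γ₁ σ h₀ h y₀ z₀ y₁ z₁ y₂ z₂)
    (hΓ : IsBoundaryTriplet A Γ₀ Γ₁) (hh₀ : h₀ ≠ 0) {hy : y₀ ∈ A†.domain}
    (hz : A† ⟨y₀, hy⟩ = z₀) : y₂ = -(h₀ : ℂ) * Γ₀ ⟨y₀, hy⟩ := by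
  obtain ⟨x, hx⟩ := hΓ.surjective (0, 1)
  simp only [Prod.mk.injEq] at hx
  have hinner := hyp.inner_add_eq x hx.1
  have hgreen := hΓ.green x ⟨y₀, hy⟩
  rw [hx.1, hx.2, hz] at hgreen
  rw [hx.2, map_one, one_mul] at hinner
  have hh₀' : (h₀ : ℂ) ≠ 0 := by exact_mod_cast hh₀
  field_simp at hinner
  simp only [map_one, one_mul, _root_.map_zero, zero_mul, sub_zero] at hgreen
  linear_combination hinner - (h₀ : ℂ) * hgreen

theorem ae_eq_mul_add (hyp : IsAdjointPair A Γ₀ Γ₁ σ h₀ h y₀ z₀ y₁ z₁ y₂ z₂)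
    (hσ : Integrable (fun t : ℝ => (1 + t ^ 2)⁻¹) σ) :
    ∀ᵐ t ∂σ, z₁ t = t * y₁ t + y₂ / h₀ :=
  ae_eq_mul_add_of_forall_integral hσ (Lp.memLp y₁) (Lp.memLp z₁) fun f hf htf => by
    simpa [extInner, extBoundary, mul_div_assoc] using hyp.apply 0 hf (by simpa using htf)

theorem eq_extBoundary (hyp : IsAdjointPair A Γ₀ Γ₁ σ h₀ h y₀ z₀ y₁ z₁ y₂ z₂)
    (hΓ : IsBoundaryTriplet A Γ₀ Γ₁) (hσ : Integrable (fun t : ℝ => (1 + t ^ 2)⁻¹) σ)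
    (hh₀ : h₀ ≠ 0) {hy : y₀ ∈ A†.domain} (hz₀ : A† ⟨y₀, hy⟩ = z₀)
    (hy₂ : y₂ = -(h₀ : ℂ) * Γ₀ ⟨y₀, hy⟩) (hz₁ : ∀ᵐ t ∂σ, z₁ t = (t : ℂ) * y₁ t - Γ₀ ⟨y₀, hy⟩)
    (hmem : MemLp (fun t : ℝ => (t : ℂ) * y₁ t - Γ₀ ⟨y₀, hy⟩) 2 σ) :
    z₂ = extBoundary σ Γ₀ Γ₁ h ⟨y₀, hy⟩ y₁ := by
  obtain ⟨x, hx⟩ := hΓ.surjective (1, 0)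
  have hx₀ : Γ₀ x = 1 := congrArg Prod.fst hx
  have hφ := memLp_div_one_add_sq hσ
  have hφx : MemLp (fun t : ℝ => (t : ℂ) * ((t : ℂ) / (1 + (t : ℂ) ^ 2)) - Γ₀ x) 2 σ := by
    refine (memLp_inv_one_add_sq hσ).neg.ae_eq (.of_forall fun t => ?_)
    have := one_add_sq_ne_zero t
    simp only [Pi.neg_apply, hx₀]
    field_simp
    ring
  subst hy₂
  -- test with `x̃ = (x, t / (1 + t²), -h₀)`: by symmetry only the third components can differ
  have e := (hyp.apply x hφ hφx).symm.trans
    (extInner_symmetric hΓ hσ hh₀ h x ⟨y₀, hy⟩ hφ (Lp.memLp y₁) hφx hmem)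
  rw [hz₀, ← extInner_congr_ae .rfl hz₁] at e
  have hh₀' : (h₀ : ℂ) ≠ 0 := by exact_mod_cast hh₀
  simp only [extInner, add_right_inj] at e
  rwa [div_left_inj' hh₀', mul_right_inj' (by simp [hx₀, hh₀'])] at e

end IsAdjointPair

theorem tilde_A_selfadjoint_h0_pos_general
    {H : Type*} [NormedAddCommGroup H] [InnerProductSpace ℂ H] [CompleteSpace H]
    (A : H →ₗ.[ℂ] H) (hdense : Dense (A.domain : Set H))
    (hsym : A ≤ A.adjoint)
    (Γ₀ Γ₁ : A.adjoint.domain →ₗ[ℂ] ℂ)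
    (hGreen : ∀ x y : A.adjoint.domain,
      ⟪(A.adjoint x : H), (y : H)⟫_ℂ - ⟪(x : H), (A.adjoint y : H)⟫_ℂ =
        conj (Γ₁ x) * Γ₀ y - conj (Γ₀ x) * Γ₁ y)
    (hsurj : Function.Surjective (fun x : A.adjoint.domain => (Γ₀ x, Γ₁ x)))
    (σ : Measure ℝ) (hσ : Integrable (fun t : ℝ => (1 + t ^ 2)⁻¹) σ)
    (h₀ h : ℝ) (hh₀ : 0 < h₀) :
    ∀ (y₀ z₀ : H) (y₁ z₁ : Lp ℂ 2 σ) (y₂ z₂ : ℂ),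
      (∀ (x₀ : H) (hx₀ : x₀ ∈ A.adjoint.domain) (x₁ : Lp ℂ 2 σ) (x₂ : ℂ),
        MemLp (fun t : ℝ => (t : ℂ) * x₁ t - Γ₀ ⟨x₀, hx₀⟩) 2 σ →
        x₂ = -(h₀ : ℂ) * Γ₀ ⟨x₀, hx₀⟩ →
        ⟪(A.adjoint ⟨x₀, hx₀⟩ : H), y₀⟫_ℂ +
            (∫ t : ℝ, conj ((t : ℂ) * x₁ t - Γ₀ ⟨x₀, hx₀⟩) * y₁ t ∂σ) +
            conj (Γ₁ ⟨x₀, hx₀⟩ + (h : ℂ) * Γ₀ ⟨x₀, hx₀⟩ +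
              ∫ t : ℝ, (x₁ t - ((t : ℂ) / (1 + (t : ℂ) ^ 2)) * Γ₀ ⟨x₀, hx₀⟩) ∂σ) *
              y₂ / (h₀ : ℂ) =
          ⟪x₀, z₀⟫_ℂ + (∫ t : ℝ, conj (x₁ t) * z₁ t ∂σ) + conj x₂ * z₂ / (h₀ : ℂ)) ↔
      (∃ hy₀ : y₀ ∈ A.adjoint.domain,
        MemLp (fun t : ℝ => (t : ℂ) * y₁ t - Γ₀ ⟨y₀, hy₀⟩) 2 σ ∧
        y₂ = -(h₀ : ℂ) * Γ₀ ⟨y₀, hy₀⟩ ∧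
        z₀ = A.adjoint ⟨y₀, hy₀⟩ ∧
        (∀ᵐ (t : ℝ) ∂σ, z₁ t = (t : ℂ) * y₁ t - Γ₀ ⟨y₀, hy₀⟩) ∧
        z₂ = Γ₁ ⟨y₀, hy₀⟩ + (h : ℂ) * Γ₀ ⟨y₀, hy₀⟩ +
          ∫ t : ℝ, (y₁ t - ((t : ℂ) / (1 + (t : ℂ) ^ 2)) * Γ₀ ⟨y₀, hy₀⟩) ∂σ) := by
  intro y₀ z₀ y₁ z₁ y₂ z₂
  change IsAdjointPair A Γ₀ Γ₁ σ h₀ h y₀ z₀ y₁ z₁ y₂ z₂ ↔ _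
  have hΓ : IsBoundaryTriplet A Γ₀ Γ₁ := ⟨hGreen, hsurj⟩
  have hh₀' : (h₀ : ℂ) ≠ 0 := by exact_mod_cast hh₀.ne'
  constructor
  · intro hyp
    obtain ⟨hy₀, hz₀⟩ := hyp.exists_mem_adjoint_domain hΓ hdense hsym
    have hy₂ := hyp.eq_neg_mul_Γ₀ hΓ hh₀.ne' hz₀
    have hz₁ : ∀ᵐ t ∂σ, z₁ t = (t : ℂ) * y₁ t - Γ₀ ⟨y₀, hy₀⟩ := by
      filter_upwards [hyp.ae_eq_mul_add hσ] with t ht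
      rw [ht, hy₂, neg_mul, neg_div, mul_div_cancel_left₀ _ hh₀', sub_eq_add_neg]
    have hmem := (Lp.memLp z₁).ae_eq hz₁
    exact ⟨hy₀, hmem, hy₂, hz₀.symm, hz₁, hyp.eq_extBoundary hΓ hσ hh₀.ne' hz₀ hy₂ hz₁ hmem⟩
  · rintro ⟨hy₀, hmem, rfl, rfl, hz₁, rfl⟩ x₀ hx₀ x₁ x₂ hx rfl
    exact (extInner_symmetric hΓ hσ hh₀.ne' h ⟨x₀, hx₀⟩ ⟨y₀, hy₀⟩ (Lp.memLp x₁) (Lp.memLp y₁)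
      hx hmem).trans (extInner_congr_ae .rfl (Filter.EventuallyEq.symm hz₁))

/-- (case `h₀ > 0`) the operator
`Ãx̃ = (A*x₀, t·x₁(t) − Γ₀x₀, Γ₁x₀ + h·Γ₀x₀ + ∫(x₁(t) − (t/(1+t²))Γ₀x₀)dσ)` on
`H̃ = H ⊕ L²(ℝ, dσ) ⊕ ℂ` with weighted inner product (weight `1/h₀` on the last summand)
and domain `{x̃ : x₀ ∈ D(A*), t·x₁(t) − Γ₀x₀ ∈ L², x₂ = −h₀Γ₀x₀}` is self-adjoint: a pair
`(ỹ, z̃)` satisfies the adjoint relation `⟨Ãx̃, ỹ⟩ = ⟨x̃, z̃⟩` for all `x̃ ∈ D(Ã)` iff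
`ỹ ∈ D(Ã)` and `z̃ = Ãỹ`. -/
theorem tilde_A_selfadjoint_h0_pos
    {H : Type*} [NormedAddCommGroup H] [InnerProductSpace ℂ H] [CompleteSpace H]
    [TopologicalSpace.SeparableSpace H]
    (A : H →ₗ.[ℂ] H) (hdense : Dense (A.domain : Set H)) (hclosed : A.IsClosed)
    (hsym : A ≤ A.adjoint)
    (Γ₀ Γ₁ : A.adjoint.domain →ₗ[ℂ] ℂ)
    (hGreen : ∀ x y : A.adjoint.domain,
      ⟪(A.adjoint x : H), (y : H)⟫_ℂ - ⟪(x : H), (A.adjoint y : H)⟫_ℂ =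
        conj (Γ₁ x) * Γ₀ y - conj (Γ₀ x) * Γ₁ y)
    (hsurj : Function.Surjective (fun x : A.adjoint.domain => (Γ₀ x, Γ₁ x)))
    (σ : Measure ℝ) (hσ : Integrable (fun t : ℝ => (1 + t ^ 2)⁻¹) σ)
    (h₀ h : ℝ) (hh₀ : 0 < h₀) :
    ∀ (y₀ z₀ : H) (y₁ z₁ : Lp ℂ 2 σ) (y₂ z₂ : ℂ),
      (∀ (x₀ : H) (hx₀ : x₀ ∈ A.adjoint.domain) (x₁ : Lp ℂ 2 σ) (x₂ : ℂ),
        MemLp (fun t : ℝ => (t : ℂ) * x₁ t - Γ₀ ⟨x₀, hx₀⟩) 2 σ →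
        x₂ = -(h₀ : ℂ) * Γ₀ ⟨x₀, hx₀⟩ →
        ⟪(A.adjoint ⟨x₀, hx₀⟩ : H), y₀⟫_ℂ +
            (∫ t : ℝ, conj ((t : ℂ) * x₁ t - Γ₀ ⟨x₀, hx₀⟩) * y₁ t ∂σ) +
            conj (Γ₁ ⟨x₀, hx₀⟩ + (h : ℂ) * Γ₀ ⟨x₀, hx₀⟩ +
              ∫ t : ℝ, (x₁ t - ((t : ℂ) / (1 + (t : ℂ) ^ 2)) * Γ₀ ⟨x₀, hx₀⟩) ∂σ) *
              y₂ / (h₀ : ℂ) =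
          ⟪x₀, z₀⟫_ℂ + (∫ t : ℝ, conj (x₁ t) * z₁ t ∂σ) + conj x₂ * z₂ / (h₀ : ℂ)) ↔
      (∃ hy₀ : y₀ ∈ A.adjoint.domain,
        MemLp (fun t : ℝ => (t : ℂ) * y₁ t - Γ₀ ⟨y₀, hy₀⟩) 2 σ ∧
        y₂ = -(h₀ : ℂ) * Γ₀ ⟨y₀, hy₀⟩ ∧
        z₀ = A.adjoint ⟨y₀, hy₀⟩ ∧
        (∀ᵐ (t : ℝ) ∂σ, z₁ t = (t : ℂ) * y₁ t - Γ₀ ⟨y₀, hy₀⟩) ∧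
        z₂ = Γ₁ ⟨y₀, hy₀⟩ + (h : ℂ) * Γ₀ ⟨y₀, hy₀⟩ +
          ∫ t : ℝ, (y₁ t - ((t : ℂ) / (1 + (t : ℂ) ^ 2)) * Γ₀ ⟨y₀, hy₀⟩) ∂σ) :=
  tilde_A_selfadjoint_h0_pos_general A hdense hsym Γ₀ Γ₁ hGreen hsurj σ hσ h₀ h hh₀
end

section
/- In the setting of the construction with h₀ > 0, suppose ỹ = (y₀, y₁, y₂) ∈ D(Ã) satisfies (à − λ)ỹ = (x, 0, 0) for some x ∈ H and λ ∈ ℂ \ ℝ. Then y₁(t) = Γ₀y₀/(t − λ) in L²(ℝ, dσ), and y₀ satisfies A*y₀ − λy₀ = x together with the boundary condition Γ₁y₀ + f(λ)·Γ₀y₀ = 0, where f(λ) = h₀λ + h + ∫ (1/(t−λ) − t/(1+t²)) dσ(t). -/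
open MeasureTheory LinearPMap
open scoped InnerProductSpace ComplexConjugate

/-!
The equation `(Ã − λ)ỹ = (x, 0, 0)` splits into three components. The first is the claim
`A*y₀ − λy₀ = x` itself. The second says `(t − λ) y₁(t) = Γ₀y₀` for `σ`-a.e. `t`, and `t − λ`
vanishes nowhere on `ℝ` because `λ` is not real, so `y₁(t) = Γ₀y₀/(t − λ)`. Substituting this
and `y₂ = −h₀Γ₀y₀` into the third component gives `Γ₁y₀ + f(λ)Γ₀y₀ = 0`.
-/

theorem Complex.ofReal_sub_ne_zero_of_im_ne_zero {z : ℂ} (hz : z.im ≠ 0) (t : ℝ) :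
    (t : ℂ) - z ≠ 0 := by
  intro h
  apply hz
  simpa using (congrArg Complex.im h).symm

section

variable {μ : Measure ℝ}

theorem ae_eq_div_sub_of_ae_mul_sub_eq {f : ℝ → ℂ} {c z : ℂ} (hz : z.im ≠ 0)
    (hf : ∀ᵐ t : ℝ ∂μ, ((t : ℂ) * f t - c) - z * f t = 0) :
    ∀ᵐ t : ℝ ∂μ, f t = c / ((t : ℂ) - z) := by
  filter_upwards [hf] with t ht
  rw [eq_div_iff (Complex.ofReal_sub_ne_zero_of_im_ne_zero hz t)]
  linear_combination ht

theorem integral_sub_mul_eq_mul_integral_of_ae_eq_div_sub {f k : ℝ → ℂ}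
    {c z : ℂ} (hf : ∀ᵐ t : ℝ ∂μ, f t = c / ((t : ℂ) - z)) :
    ∫ t, (f t - k t * c) ∂μ = c * ∫ t, (1 / ((t : ℂ) - z) - k t) ∂μ := by
  rw [← integral_const_mul]
  refine integral_congr_ae ?_
  filter_upwards [hf] with t ht
  rw [ht]
  ring

end

theorem resolvent_satisfies_boundary_condition_general
    {H : Type*} [NormedAddCommGroup H] [InnerProductSpace ℂ H] [CompleteSpace H]
    (A : H →ₗ.[ℂ] H)
    (Γ₀ Γ₁ : A.adjoint.domain →ₗ[ℂ] ℂ)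
    (σ : Measure ℝ)
    (h₀ h : ℝ)
    (x y₀ : H) (hy₀ : y₀ ∈ A.adjoint.domain) (y₁ : Lp ℂ 2 σ) (y₂ : ℂ)
    (lam : ℂ) (hlam : lam.im ≠ 0)
    -- ỹ ∈ D(Ã):
    (hy₂ : y₂ = -(h₀ : ℂ) * Γ₀ ⟨y₀, hy₀⟩)
    -- (Ã − λ)ỹ = (x, 0, 0):
    (hres₀ : (A.adjoint ⟨y₀, hy₀⟩ : H) - lam • y₀ = x)
    (hres₁ : ∀ᵐ (t : ℝ) ∂σ, ((t : ℂ) * y₁ t - Γ₀ ⟨y₀, hy₀⟩) - lam * y₁ t = 0)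
    (hres₂ : (Γ₁ ⟨y₀, hy₀⟩ + (h : ℂ) * Γ₀ ⟨y₀, hy₀⟩ +
        ∫ t : ℝ, (y₁ t - ((t : ℂ) / (1 + (t : ℂ) ^ 2)) * Γ₀ ⟨y₀, hy₀⟩) ∂σ) - lam * y₂
        = 0) :
    (∀ᵐ (t : ℝ) ∂σ, y₁ t = Γ₀ ⟨y₀, hy₀⟩ / ((t : ℂ) - lam)) ∧
    (A.adjoint ⟨y₀, hy₀⟩ : H) - lam • y₀ = x ∧
    Γ₁ ⟨y₀, hy₀⟩ +
      ((h₀ : ℂ) * lam + (h : ℂ) +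
        ∫ t : ℝ, (1 / ((t : ℂ) - lam) - (t : ℂ) / (1 + (t : ℂ) ^ 2)) ∂σ) *
        Γ₀ ⟨y₀, hy₀⟩ = 0 := by
  have hy₁ := ae_eq_div_sub_of_ae_mul_sub_eq hlam hres₁
  refine ⟨hy₁, hres₀, ?_⟩
  rw [hy₂, integral_sub_mul_eq_mul_integral_of_ae_eq_div_sub hy₁] at hres₂
  linear_combination hres₂

/-- (case `h₀ > 0`) if `ỹ = (y₀, y₁, y₂) ∈ D(Ã)` satisfies
`(Ã − λ)ỹ = (x, 0, 0)` with `λ` non-real, then `y₁(t) = Γ₀y₀/(t − λ)` in `L²(ℝ, dσ)`, and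
`y₀` satisfies `A*y₀ − λy₀ = x` and the boundary condition `Γ₁y₀ + f(λ)Γ₀y₀ = 0`, where
`f(λ) = h₀λ + h + ∫(1/(t−λ) − t/(1+t²))dσ(t)`. -/
theorem resolvent_satisfies_boundary_condition
    {H : Type*} [NormedAddCommGroup H] [InnerProductSpace ℂ H] [CompleteSpace H]
    [TopologicalSpace.SeparableSpace H]
    (A : H →ₗ.[ℂ] H) (hdense : Dense (A.domain : Set H)) (hclosed : A.IsClosed)
    (hsym : A ≤ A.adjoint)
    (Γ₀ Γ₁ : A.adjoint.domain →ₗ[ℂ] ℂ)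
    (hGreen : ∀ x y : A.adjoint.domain,
      ⟪(A.adjoint x : H), (y : H)⟫_ℂ - ⟪(x : H), (A.adjoint y : H)⟫_ℂ =
        conj (Γ₁ x) * Γ₀ y - conj (Γ₀ x) * Γ₁ y)
    (hsurj : Function.Surjective (fun x : A.adjoint.domain => (Γ₀ x, Γ₁ x)))
    (σ : Measure ℝ) (hσ : Integrable (fun t : ℝ => (1 + t ^ 2)⁻¹) σ)
    (h₀ h : ℝ) (hh₀ : 0 < h₀)
    (x y₀ : H) (hy₀ : y₀ ∈ A.adjoint.domain) (y₁ : Lp ℂ 2 σ) (y₂ : ℂ)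
    (lam : ℂ) (hlam : lam.im ≠ 0)
    -- ỹ ∈ D(Ã):
    (hdom : MemLp (fun t : ℝ => (t : ℂ) * y₁ t - Γ₀ ⟨y₀, hy₀⟩) 2 σ)
    (hy₂ : y₂ = -(h₀ : ℂ) * Γ₀ ⟨y₀, hy₀⟩)
    -- (Ã − λ)ỹ = (x, 0, 0):
    (hres₀ : (A.adjoint ⟨y₀, hy₀⟩ : H) - lam • y₀ = x)
    (hres₁ : ∀ᵐ (t : ℝ) ∂σ, ((t : ℂ) * y₁ t - Γ₀ ⟨y₀, hy₀⟩) - lam * y₁ t = 0)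
    (hres₂ : (Γ₁ ⟨y₀, hy₀⟩ + (h : ℂ) * Γ₀ ⟨y₀, hy₀⟩ +
        ∫ t : ℝ, (y₁ t - ((t : ℂ) / (1 + (t : ℂ) ^ 2)) * Γ₀ ⟨y₀, hy₀⟩) ∂σ) - lam * y₂
        = 0) :
    (∀ᵐ (t : ℝ) ∂σ, y₁ t = Γ₀ ⟨y₀, hy₀⟩ / ((t : ℂ) - lam)) ∧
    (A.adjoint ⟨y₀, hy₀⟩ : H) - lam • y₀ = x ∧
    Γ₁ ⟨y₀, hy₀⟩ +
      ((h₀ : ℂ) * lam + (h : ℂ) +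
        ∫ t : ℝ, (1 / ((t : ℂ) - lam) - (t : ℂ) / (1 + (t : ℂ) ^ 2)) ∂σ) *
        Γ₀ ⟨y₀, hy₀⟩ = 0 :=
  resolvent_satisfies_boundary_condition_general A Γ₀ Γ₁ σ h₀ h x y₀ hy₀ y₁ y₂ lam hlam hy₂ hres₀
    hres₁ hres₂
end

section
/- In the setting of the construction, the extension à acts in H itself (H̃ = H, i.e., the auxiliary summands vanish) if and only if h₀ = 0 and σ = 0, which holds if and only if the associated Herglotz–Nevanlinna function f(λ) = h₀λ + h + ∫ (1/(t−λ) − t/(1+t²)) dσ(t) is a real constant. -/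
open MeasureTheory Complex

/-! Evaluating `f` at `λ = i` turns the kernel into `i / (1 + t²)`, so `Im f(i) = h₀ + ∫ dσ/(1+t²)`.
A real constant has `Im f(i) = 0`, and since `1/(1+t²)` is everywhere positive and integrable this
forces `h₀ = 0` and `σ = 0`. The same function is a nowhere-vanishing element of `L²(σ)`, which is
why `L²(σ)` is trivial only when `σ = 0`. -/

namespace MeasureTheory

variable {α : Type*} [MeasurableSpace α] {μ : Measure α}

theorem ae_eq_zero_iff_eq_zero_of_ne_zero {E : Type*} [Zero E] {f : α → E}
    (hf : ∀ x, f x ≠ 0) : f =ᵐ[μ] 0 ↔ μ = 0 := by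
  rw [Filter.EventuallyEq, ae_iff, ← Measure.measure_univ_eq_zero]
  simp [hf]

theorem integral_eq_zero_iff_eq_zero_of_pos {f : α → ℝ} (hf : ∀ x, 0 < f x)
    (hfi : Integrable f μ) : ∫ x, f x ∂μ = 0 ↔ μ = 0 := by
  rw [integral_eq_zero_iff_of_nonneg (fun x => (hf x).le) hfi,
    ae_eq_zero_iff_eq_zero_of_ne_zero fun x => (hf x).ne']

theorem Lp.subsingleton_iff_of_memLp {E : Type*} [NormedAddCommGroup E] {p : ENNReal}
    {f : α → E} (hf : MemLp f p μ) (hf₀ : ∀ x, f x ≠ 0) :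
    Subsingleton (Lp E p μ) ↔ μ = 0 := by
  constructor
  · intro _
    have hzero : hf.toLp f = 0 := Subsingleton.elim _ _
    exact (ae_eq_zero_iff_eq_zero_of_ne_zero hf₀).mp
      (hf.coeFn_toLp.symm.trans (hzero ▸ Lp.coeFn_zero E p μ))
  · rintro rfl
    exact ⟨fun a b => Lp.ext (by simp [Filter.EventuallyEq])⟩

theorem Integrable.memLp_two_of_le_one {f : α → ℝ} (hfi : Integrable f μ) (hf₀ : ∀ x, 0 ≤ f x)
    (hf₁ : ∀ x, f x ≤ 1) : MemLp f 2 μ := by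
  refine (memLp_two_iff_integrable_sq_norm hfi.aestronglyMeasurable).mpr
    (hfi.mono' (hfi.aestronglyMeasurable.norm.pow 2) (Filter.Eventually.of_forall fun x => ?_))
  rw [Real.norm_eq_abs, Real.norm_eq_abs, abs_of_nonneg (hf₀ x), abs_of_nonneg (by positivity)]
  nlinarith [hf₀ x, hf₁ x]

end MeasureTheory

theorem inv_one_add_sq_pos (t : ℝ) : 0 < (1 + t ^ 2)⁻¹ := by positivity

theorem inv_one_add_sq_le_one (t : ℝ) : (1 + t ^ 2)⁻¹ ≤ 1 :=
  inv_le_one_of_one_le₀ (by nlinarith [sq_nonneg t])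

theorem herglotz_kernel_at_I (t : ℝ) :
    1 / ((t : ℂ) - I) - (t : ℂ) / (1 + (t : ℂ) ^ 2) = I * (((1 + t ^ 2)⁻¹ : ℝ) : ℂ) := by
  have hsub : (t : ℂ) - I ≠ 0 := fun h => by simpa using congrArg im h
  have hadd : (t : ℂ) + I ≠ 0 := fun h => by simpa using congrArg im h
  have hfactor : (1 : ℂ) + (t : ℂ) ^ 2 = ((t : ℂ) - I) * ((t : ℂ) + I) := by
    ring_nf; rw [I_sq]; ring
  push_cast
  rw [hfactor]
  field_simp
  ring

theorem im_herglotz_nevanlinna_at_I (σ : Measure ℝ) (h₀ h : ℝ) :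
    ((h₀ : ℂ) * I + (h : ℂ) +
      ∫ t : ℝ, (1 / ((t : ℂ) - I) - (t : ℂ) / (1 + (t : ℂ) ^ 2)) ∂σ).im =
      h₀ + ∫ t : ℝ, (1 + t ^ 2)⁻¹ ∂σ := by
  rw [integral_congr_ae (Filter.Eventually.of_forall herglotz_kernel_at_I), integral_const_mul,
    integral_complex_ofReal]
  simp

/-- the extension `Ã` acts in `H` itself (the auxiliary summands
`L²(ℝ, dσ)` and — when `h₀ > 0` — `ℂ` vanish) iff `h₀ = 0` and `σ = 0`, iff the
Herglotz–Nevanlinna function `f(λ) = h₀λ + h + ∫(1/(t−λ) − t/(1+t²))dσ` is a real constant. -/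
theorem canonical_extension_iff_real_constant (σ : Measure ℝ) (h₀ h : ℝ) (hh₀ : 0 ≤ h₀)
    (hσ : Integrable (fun t : ℝ => (1 + t ^ 2)⁻¹) σ) :
    ((h₀ = 0 ∧ Subsingleton (Lp ℂ 2 σ)) ↔ (h₀ = 0 ∧ σ = 0)) ∧
    ((h₀ = 0 ∧ σ = 0) ↔
      ∃ c : ℝ, ∀ lam : ℂ, 0 < lam.im →
        (h₀ : ℂ) * lam + (h : ℂ) +
          ∫ t : ℝ, (1 / ((t : ℂ) - lam) - (t : ℂ) / (1 + (t : ℂ) ^ 2)) ∂σ = (c : ℂ)) := by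
  have hL2 : MemLp (fun t : ℝ => (((1 + t ^ 2)⁻¹ : ℝ) : ℂ)) 2 σ :=
    (hσ.memLp_two_of_le_one (fun t => (inv_one_add_sq_pos t).le) inv_one_add_sq_le_one).ofReal
  refine ⟨and_congr_right fun _ =>
    Lp.subsingleton_iff_of_memLp hL2 fun t => ofReal_ne_zero.mpr (inv_one_add_sq_pos t).ne', ?_⟩
  constructor
  · rintro ⟨rfl, rfl⟩
    exact ⟨h, fun lam _ => by simp⟩
  · rintro ⟨c, hc⟩
    have him : h₀ + ∫ t : ℝ, (1 + t ^ 2)⁻¹ ∂σ = 0 := by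
      rw [← im_herglotz_nevanlinna_at_I, hc I (by simp), ofReal_im]
    have hnonneg : 0 ≤ ∫ t : ℝ, (1 + t ^ 2)⁻¹ ∂σ :=
      integral_nonneg fun t => (inv_one_add_sq_pos t).le
    exact ⟨by linarith, (integral_eq_zero_iff_eq_zero_of_pos inv_one_add_sq_pos hσ).mp
      (by linarith)⟩
end
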